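/- For a 2-form ω on a manifold M, the tangent lift ω_T ∈ Ω^2(TM) is a linear 2-form on the vector bundle TM → M covering the map ω^♯: TM → T^*M, and when ω is closed one has ω_T = -(ω^♯)^* ω_can, consistent with (ω^♯)^t = -ω^♯. -/

import Mathlib

/-- `k`-forms on `E` (as plain functions; multilinearity is a predicate). -/
abbrev Form (E : Type*) (k : ℕ) := E → (Fin k → E) → ℝ

variable {E : Type*} [NormedAddCommGroup E] [NormedSpace ℝ E] {k : ℕ}

noncomputable def formExtDeriv {P : Type*} [NormedAddCommGroup P] [NormedSpace ℝ P]
    (α : Form P k) : Form P (k + 1) :=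
  fun x v => ∑ i : Fin (k + 1), (-1 : ℝ) ^ (i : ℕ) *
    fderiv ℝ (fun y => α y (v ∘ i.succAbove)) x (v i)

noncomputable def tangentLift (α : Form E k) : Form (E × E) k :=
  fun p U => fderiv ℝ (fun y => α y (fun i => (U i).1)) p.1 p.2
    + ∑ i : Fin k, α p.1 (fun j => if j = i then (U i).2 else (U j).1)

noncomputable def lieDeriv {P : Type*} [NormedAddCommGroup P] [NormedSpace ℝ P]
    (V : P → P) (α : Form P k) : Form P k :=
  fun x v => fderiv ℝ (fun y => α y v) x (V x)
    + ∑ i : Fin k, α x (fun j => if j = i then fderiv ℝ V x (v i) else v j)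

def euler {F : Type*} [NormedAddCommGroup F] [NormedSpace ℝ F] :
    E × F → E × F := fun a => (0, a.2)

/-- Linearity of a 2-form on the total space of `A = E × F → E`. -/
def IsLinearForm {F : Type*} [NormedAddCommGroup F] [NormedSpace ℝ F]
    (Λ : Form (E × F) 2) : Prop :=
  lieDeriv euler Λ = Λ

/-- `Λ` covers the bundle map `λ : TM → A^*`. -/
def Covers {F : Type*} [NormedAddCommGroup F] [NormedSpace ℝ F]
    (Λ : Form (E × F) 2) (lam : E → E →L[ℝ] F →L[ℝ] ℝ) : Prop :=
  ∀ (x : E) (u : F) (v : E) (w w' : F),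
    Λ (x, u) ![(v, w), ((0 : E), w')] = lam x v w'

noncomputable def pb {G H : Type*} [NormedAddCommGroup G] [NormedSpace ℝ G]
    [NormedAddCommGroup H] [NormedSpace ℝ H]
    (f : G → H) (α : Form H k) : Form G k :=
  fun x v => α (f x) (fun i => fderiv ℝ f x (v i))

def thetaCan : Form (E × (E →L[ℝ] ℝ)) 1 :=
  fun ξ U => ξ.2 (U 0).1

noncomputable def omegaCan : Form (E × (E →L[ℝ] ℝ)) 2 :=
  -(formExtDeriv thetaCan)

noncomputable def evAB (a b : E) : (E →L[ℝ] E →L[ℝ] ℝ) →L[ℝ] ℝ :=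
  (ContinuousLinearMap.apply ℝ ℝ b).comp (ContinuousLinearMap.apply ℝ (E →L[ℝ] ℝ) a)

@[simp] lemma evAB_apply (a b : E) (M : E →L[ℝ] E →L[ℝ] ℝ) : evAB a b M = M a b := rfl

lemma hasF_ab (Ω : E → E →L[ℝ] E →L[ℝ] ℝ) (hΩ : ContDiff ℝ (⊤ : ℕ∞) Ω) (a b x : E) :
    HasFDerivAt (fun y => Ω y a b) ((evAB a b).comp (fderiv ℝ Ω x)) x := by
  have h1 : HasFDerivAt (fun y => Ω y a) _ x :=
    ((hΩ.differentiable (by simp) x).hasFDerivAt).clm_apply (hasFDerivAt_const a x)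
  have h2 := h1.clm_apply (hasFDerivAt_const b x)
  refine h2.congr_fderiv ?_
  ext u
  simp [evAB]

lemma tlift_val (Ω : E → E →L[ℝ] E →L[ℝ] ℝ) (hΩ : ContDiff ℝ (⊤ : ℕ∞) Ω)
    (q : E × E) (w : Fin 2 → E × E) :
    tangentLift (k := 2) (fun x v => Ω x (v 0) (v 1)) q w
      = fderiv ℝ Ω q.1 q.2 (w 0).1 (w 1).1
        + (Ω q.1 (w 0).2 (w 1).1 + Ω q.1 (w 0).1 (w 1).2) := by
  simp only [tangentLift, Fin.sum_univ_two]
  rw [(hasF_ab Ω hΩ (w 0).1 (w 1).1 q.1).fderiv]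
  simp

lemma part1 (Ω : E → E →L[ℝ] E →L[ℝ] ℝ) (hΩ : ContDiff ℝ (⊤ : ℕ∞) Ω) :
    IsLinearForm (tangentLift (k := 2) (fun x v => Ω x (v 0) (v 1))) := by
  have heul : (euler : E × E → E × E)
      = ⇑(ContinuousLinearMap.prod 0 (ContinuousLinearMap.snd ℝ E E)) := by
    funext a; simp [euler]
  funext p v
  simp only [lieDeriv, tlift_val Ω hΩ, Fin.sum_univ_two]
  have hfab : ContDiff ℝ (⊤ : ℕ∞) (fun y => Ω y (v 0).1 (v 1).1) :=
    (hΩ.clm_apply contDiff_const).clm_apply contDiff_const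
  have hD2 : ContDiff ℝ (⊤ : ℕ∞) (fderiv ℝ (fun y => Ω y (v 0).1 (v 1).1)) := hfab.fderiv_right (by simp)
  have hc : HasFDerivAt (fun q : E × E => fderiv ℝ (fun y => Ω y (v 0).1 (v 1).1) q.1)
      ((fderiv ℝ (fderiv ℝ (fun y => Ω y (v 0).1 (v 1).1)) p.1).comp
        (ContinuousLinearMap.fst ℝ E E)) p :=
    ((hD2.differentiable (by simp) p.1).hasFDerivAt).comp p hasFDerivAt_fst
  have h1b := hc.clm_apply (hasFDerivAt_snd (𝕜 := ℝ) (E := E) (F := E))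
  rw [show (fun y : E × E => fderiv ℝ Ω y.1 y.2 (v 0).1 (v 1).1
      + (Ω y.1 (v 0).2 (v 1).1 + Ω y.1 (v 0).1 (v 1).2))
      = fun y : E × E => fderiv ℝ (fun y => Ω y (v 0).1 (v 1).1) y.1 y.2
      + (Ω y.1 (v 0).2 (v 1).1 + Ω y.1 (v 0).1 (v 1).2) from by
    funext y; rw [(hasF_ab Ω hΩ (v 0).1 (v 1).1 y.1).fderiv]; rfl]
  have h2 : HasFDerivAt (fun q : E × E => Ω q.1 (v 0).2 (v 1).1)
      (((evAB (v 0).2 (v 1).1).comp (fderiv ℝ Ω p.1)).comp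
        (ContinuousLinearMap.fst ℝ E E)) p :=
    (hasF_ab Ω hΩ (v 0).2 (v 1).1 p.1).comp p hasFDerivAt_fst
  have h3 : HasFDerivAt (fun q : E × E => Ω q.1 (v 0).1 (v 1).2)
      (((evAB (v 0).1 (v 1).2).comp (fderiv ℝ Ω p.1)).comp
        (ContinuousLinearMap.fst ℝ E E)) p :=
    (hasF_ab Ω hΩ (v 0).1 (v 1).2 p.1).comp p hasFDerivAt_fst
  have htot := h1b.fun_add (h2.fun_add h3)
  rw [htot.fderiv, heul, ContinuousLinearMap.fderiv]
  simp [euler]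
  rw [(hasF_ab Ω hΩ (v 0).1 (v 1).1 p.1).fderiv]
  simp

lemma fd_ab (Ω : E → E →L[ℝ] E →L[ℝ] ℝ) (hΩ : ContDiff ℝ (⊤ : ℕ∞) Ω) (a b x : E) :
    fderiv ℝ (fun y => Ω y a b) x = (evAB a b).comp (fderiv ℝ Ω x) :=
  (hasF_ab Ω hΩ a b x).fderiv

lemma fd_th (c : E) (ξ : E × (E →L[ℝ] ℝ)) :
    fderiv ℝ (fun y : E × (E →L[ℝ] ℝ) => y.2 c) ξ
      = (ContinuousLinearMap.apply ℝ ℝ c).comp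
          (ContinuousLinearMap.snd ℝ E (E →L[ℝ] ℝ)) := by
  have h : HasFDerivAt (fun y : E × (E →L[ℝ] ℝ) => y.2 c)
      ((ContinuousLinearMap.apply ℝ ℝ c).comp
        (ContinuousLinearMap.snd ℝ E (E →L[ℝ] ℝ))) ξ :=
    ContinuousLinearMap.hasFDerivAt
      ((ContinuousLinearMap.apply ℝ ℝ c).comp (ContinuousLinearMap.snd ℝ E (E →L[ℝ] ℝ)))
  exact h.fderiv

lemma part2 (Ω : E → E →L[ℝ] E →L[ℝ] ℝ) (hΩ : ContDiff ℝ (⊤ : ℕ∞) Ω) :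
    Covers (tangentLift (k := 2) (fun x v => Ω x (v 0) (v 1))) Ω := by
  intro x u v w w'
  rw [tlift_val Ω hΩ]
  simp

lemma part3 (Ω : E → E →L[ℝ] E →L[ℝ] ℝ)
    (hskew : ∀ x u v, Ω x u v = - Ω x v u) (hΩ : ContDiff ℝ (⊤ : ℕ∞) Ω)
    (hc : formExtDeriv (k := 2) (fun x v => Ω x (v 0) (v 1)) = 0) :
    tangentLift (k := 2) (fun x v => Ω x (v 0) (v 1))
      = -(pb (fun X : E × E => (X.1, Ω X.1 X.2)) omegaCan) := by
  funext p v
  rw [tlift_val Ω hΩ]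
  have h3 := congrFun (congrFun hc p.1) ![p.2, (v 0).1, (v 1).1]
  have s00 : (0 : Fin 3).succAbove 0 = 1 := rfl
  have s01 : (0 : Fin 3).succAbove 1 = 2 := rfl
  have s10 : (1 : Fin 3).succAbove 0 = 0 := rfl
  have s11 : (1 : Fin 3).succAbove 1 = 2 := rfl
  have s20 : (2 : Fin 3).succAbove 0 = 0 := rfl
  have s21 : (2 : Fin 3).succAbove 1 = 1 := rfl
  simp only [formExtDeriv, Pi.zero_apply] at h3
  rw [Fin.sum_univ_three] at h3
  simp only [Function.comp_apply, s00, s01, s10, s11, s20, s21,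
    Matrix.cons_val_zero, Matrix.cons_val_one, Matrix.head_cons, Matrix.cons_val_two,
    Matrix.tail_cons, fd_ab Ω hΩ, evAB_apply, ContinuousLinearMap.comp_apply,
    Fin.val_zero, Fin.val_one, Fin.val_two, pow_zero, pow_one, pow_two,
    one_mul, neg_one_mul, neg_mul, neg_neg] at h3
  have hf : HasFDerivAt (fun X : E × E => (X.1, Ω X.1 X.2))
      ((ContinuousLinearMap.fst ℝ E E).prod
        ((Ω p.1).comp (ContinuousLinearMap.snd ℝ E E)
          + ((fderiv ℝ Ω p.1).comp (ContinuousLinearMap.fst ℝ E E)).flip p.2)) p :=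
    hasFDerivAt_fst.prodMk
      ((((hΩ.differentiable (by simp) p.1).hasFDerivAt).comp p hasFDerivAt_fst).clm_apply
        hasFDerivAt_snd)
  have t0 : (0 : Fin 2).succAbove 0 = 1 := rfl
  have t1 : (1 : Fin 2).succAbove 0 = 0 := rfl
  simp only [pb, Pi.neg_apply, omegaCan, formExtDeriv, thetaCan]
  rw [Fin.sum_univ_two]
  simp only [Function.comp_apply, t0, t1, hf.fderiv, fd_th,
    ContinuousLinearMap.comp_apply, ContinuousLinearMap.prod_apply,
    ContinuousLinearMap.add_apply, ContinuousLinearMap.flip_apply,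
    ContinuousLinearMap.coe_fst', ContinuousLinearMap.coe_snd',
    ContinuousLinearMap.apply_apply, Fin.val_zero, Fin.val_one, pow_zero, pow_one,
    one_mul, neg_one_mul, map_add, neg_neg]
  have hs := hskew p.1 (v 0).1 (v 1).2
  linarith [h3, hs]

/-- for a 2-form `ω` on `M`, the tangent lift `ω_T` is a linear
2-form on `TM → M` covering `ω^♯ : TM → T^*M`; if `ω` is closed then
`ω_T = -(ω^♯)^* ω_can` (consistently with `(ω^♯)^t = -ω^♯`). -/
theorem tangentLift_two_form_linear
    (Ω : E → E →L[ℝ] E →L[ℝ] ℝ)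
    (hskew : ∀ x u v, Ω x u v = - Ω x v u)
    (hΩ : ContDiff ℝ (⊤ : ℕ∞) Ω) :
    IsLinearForm (tangentLift (k := 2) (fun x v => Ω x (v 0) (v 1))) ∧
      Covers (tangentLift (k := 2) (fun x v => Ω x (v 0) (v 1))) Ω ∧
      (formExtDeriv (k := 2) (fun x v => Ω x (v 0) (v 1)) = 0 →
        tangentLift (k := 2) (fun x v => Ω x (v 0) (v 1))
          = -(pb (fun X : E × E => (X.1, Ω X.1 X.2)) omegaCan)) :=
  ⟨part1 Ω hΩ, part2 Ω hΩ, part3 Ω hskew hΩ⟩
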